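/- arXiv:2603.01365 — 5 statements merged into one kernel-verified Lean document; each statement's English description precedes it below -/
import Mathlib

section
/- Performance difference lemma: For any two policies π' and π, J(π') − J(π) = (1/(1−γ)) · E_{s∼d^{π'}, a∼π'(·|s)}[A_π(s,a)], where d^{π'}(s) = (1−γ) Σ_{t≥0} γ^t Pr(s_t = s | μ, π') is the discounted future state visitation distribution. -/
open Finset

noncomputable section

variable {S A : Type*} [Fintype S] [Fintype A] [DecidableEq S]

/-- A policy assigns a probability distribution over actions to each state. -/
def IsPolicy (p : S → A → ℝ) : Prop :=
  (∀ s a, 0 ≤ p s a) ∧ ∀ s, ∑ a, p s a = 1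

/-- A finite Markov decision process with discount factor `γ ∈ [0,1)`. -/
structure FinMDP (S A : Type*) [Fintype S] [Fintype A] where
  P : S → A → S → ℝ
  P_nonneg : ∀ s a s', 0 ≤ P s a s'
  P_sum : ∀ s a, ∑ s', P s a s' = 1
  r : S → A → ℝ
  μ : S → ℝ
  μ_nonneg : ∀ s, 0 ≤ μ s
  μ_sum : ∑ s, μ s = 1
  γ : ℝ
  γ_nonneg : 0 ≤ γ
  γ_lt_one : γ < 1

/-- One step of the state-distribution evolution under a policy. -/
def stepDist (M : FinMDP S A) (π : S → A → ℝ) (d : S → ℝ) : S → ℝ :=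
  fun s' => ∑ s, ∑ a, d s * π s a * M.P s a s'

/-- Distribution of the state at time `t`, starting from `μ`, following `π`. -/
def stateDist (M : FinMDP S A) (π : S → A → ℝ) : ℕ → S → ℝ
  | 0 => M.μ
  | t + 1 => stepDist M π (stateDist M π t)

/-- Expected discounted return `J(π)` with initial distribution `μ`. -/
def Jret (M : FinMDP S A) (π : S → A → ℝ) : ℝ :=
  ∑' t : ℕ, M.γ ^ t * ∑ s, stateDist M π t s * ∑ a, π s a * M.r s a

/-- Discounted future state visitation distribution `d^π`. -/
def dVisit (M : FinMDP S A) (π : S → A → ℝ) (s : S) : ℝ :=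
  (1 - M.γ) * ∑' t : ℕ, M.γ ^ t * stateDist M π t s

/-- Distribution of the state at time `t` starting deterministically from `s₀`. -/
def stateDistFrom (M : FinMDP S A) (π : S → A → ℝ) (s₀ : S) : ℕ → S → ℝ
  | 0 => fun s => if s = s₀ then 1 else 0
  | t + 1 => stepDist M π (stateDistFrom M π s₀ t)

/-- State value function `V_π(s₀)`: expected discounted return starting from `s₀`. -/
def Vval (M : FinMDP S A) (π : S → A → ℝ) (s₀ : S) : ℝ :=
  ∑' t : ℕ, M.γ ^ t * ∑ s, stateDistFrom M π s₀ t s * ∑ a, π s a * M.r s a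

/-- State-action value function `Q_π(s,a)`. -/
def Qval (M : FinMDP S A) (π : S → A → ℝ) (s : S) (a : A) : ℝ :=
  M.r s a + M.γ * ∑ s', M.P s a s' * Vval M π s'

/-- Advantage function `A_π(s,a) = Q_π(s,a) - V_π(s)`. -/
def Adv (M : FinMDP S A) (π : S → A → ℝ) (s : S) (a : A) : ℝ :=
  Qval M π s a - Vval M π s

/-- Total variation distance between two distributions over actions. -/
def DTV (p q : A → ℝ) : ℝ := (1 / 2) * ∑ a, |p a - q a|

/-- KL divergence between two distributions over actions. -/
def DKL (p q : A → ℝ) : ℝ := ∑ a, p a * Real.log (p a / q a)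

/-!
Averaged over `a ∼ π'(·|s)`, the advantage `A_π(s,a) = r(s,a) + γ E[V_π(s')] - V_π(s)` is the
reward of `π'` plus a one-step change of `V_π` along the trajectory of `π'`. Weighted by `γ^t` and
summed over time, the `V_π` terms telescope to `-E_μ[V_π] = -J(π)`, leaving `J(π') - J(π)`; the
factor `1 / (1 - γ)` only undoes the normalisation of `d^{π'}`.
-/

section Distributions

variable {ι : Type*} [Fintype ι]

def IsDistrib (d : ι → ℝ) : Prop :=
  (∀ i, 0 ≤ d i) ∧ ∑ i, d i = 1

theorem IsDistrib.abs_le_one {d : ι → ℝ} (hd : IsDistrib d) (i : ι) : |d i| ≤ 1 := by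
  rw [abs_of_nonneg (hd.1 i)]
  exact hd.2 ▸ single_le_sum (fun j _ => hd.1 j) (mem_univ i)

theorem IsDistrib.abs_sum_mul_le {d : ι → ℝ} (hd : IsDistrib d) (f : ι → ℝ) :
    |∑ i, d i * f i| ≤ ∑ i, |f i| :=
  calc |∑ i, d i * f i| ≤ ∑ i, |d i * f i| := abs_sum_le_sum_abs _ _
    _ ≤ ∑ i, |f i| := sum_le_sum fun i _ => by
        rw [abs_mul]
        exact mul_le_of_le_one_left (abs_nonneg _) (hd.abs_le_one i)

theorem summable_geometric_mul_of_abs_le {γ : ℝ} (h0 : 0 ≤ γ) (h1 : γ < 1) {f : ℕ → ℝ} {C : ℝ}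
    (hf : ∀ t, |f t| ≤ C) : Summable fun t => γ ^ t * f t := by
  refine .of_norm_bounded ((summable_geometric_of_lt_one h0 h1).mul_left C) fun t => ?_
  rw [Real.norm_eq_abs, abs_mul, abs_pow, abs_of_nonneg h0, mul_comm]
  exact mul_le_mul_of_nonneg_right (hf t) (pow_nonneg h0 t)

theorem summable_geometric_mul_sum_mul {γ : ℝ} (h0 : 0 ≤ γ) (h1 : γ < 1) {d : ℕ → ι → ℝ}
    (hd : ∀ t, IsDistrib (d t)) (f : ι → ℝ) :
    Summable fun t => γ ^ t * ∑ i, d t i * f i :=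
  summable_geometric_mul_of_abs_le h0 h1 fun t => (hd t).abs_sum_mul_le f

theorem tsum_geometric_mul_add_sub {γ : ℝ} {r w : ℕ → ℝ} (hr : Summable fun t => γ ^ t * r t)
    (hw : Summable fun t => γ ^ t * w t) :
    ∑' t, γ ^ t * (r t + γ * w (t + 1) - w t) = ∑' t, γ ^ t * r t - w 0 := by
  have hw' : Summable fun t => γ ^ (t + 1) * w (t + 1) := (summable_nat_add_iff 1).mpr hw
  calc ∑' t, γ ^ t * (r t + γ * w (t + 1) - w t)
      = ∑' t, (γ ^ t * r t + (γ ^ (t + 1) * w (t + 1) - γ ^ t * w t)) :=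
        tsum_congr fun t => by ring
    _ = ∑' t, γ ^ t * r t + (∑' t, γ ^ (t + 1) * w (t + 1) - ∑' t, γ ^ t * w t) := by
        rw [hr.tsum_add (hw'.sub hw), hw'.tsum_sub hw]
    _ = ∑' t, γ ^ t * r t - w 0 := by
        rw [hw.tsum_eq_zero_add]
        simp only [pow_zero, one_mul]
        ring

end Distributions

section Evolution

variable {S A : Type*} [Fintype S] [Fintype A] (M : FinMDP S A)

theorem sum_stepDist_mul (π : S → A → ℝ) (d f : S → ℝ) :
    ∑ s', stepDist M π d s' * f s' = ∑ s, d s * ∑ a, π s a * ∑ s', M.P s a s' * f s' := by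
  simp only [stepDist, sum_mul, mul_sum]
  rw [sum_comm]
  refine sum_congr rfl fun s _ => ?_
  rw [sum_comm]
  exact sum_congr rfl fun a _ => sum_congr rfl fun s' _ => by ring

theorem stepDist_sum_mul {ι : Type*} [Fintype ι] (π : S → A → ℝ) (c : ι → ℝ) (f : ι → S → ℝ)
    (s' : S) :
    stepDist M π (fun s => ∑ i, c i * f i s) s' = ∑ i, c i * stepDist M π (f i) s' := by
  simp only [stepDist, sum_mul, mul_sum]
  rw [sum_congr rfl fun s _ => sum_comm, sum_comm]
  exact sum_congr rfl fun i _ => sum_congr rfl fun s _ => sum_congr rfl fun a _ => by ring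

theorem isDistrib_stepDist {π : S → A → ℝ} (hπ : IsPolicy π) {d : S → ℝ} (hd : IsDistrib d) :
    IsDistrib (stepDist M π d) := by
  refine ⟨fun s' => sum_nonneg fun s _ => sum_nonneg fun a _ =>
    mul_nonneg (mul_nonneg (hd.1 s) (hπ.1 s a)) (M.P_nonneg s a s'), ?_⟩
  simpa [M.P_sum, hπ.2, hd.2] using sum_stepDist_mul M π d 1

theorem isDistrib_stateDist {π : S → A → ℝ} (hπ : IsPolicy π) (t : ℕ) :
    IsDistrib (stateDist M π t) := by
  induction t with
  | zero => exact ⟨M.μ_nonneg, M.μ_sum⟩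
  | succ t ih => exact isDistrib_stepDist M hπ ih

theorem isDistrib_stateDistFrom [DecidableEq S] {π : S → A → ℝ} (hπ : IsPolicy π) (s₀ : S)
    (t : ℕ) : IsDistrib (stateDistFrom M π s₀ t) := by
  induction t with
  | zero => exact ⟨fun s => by simp only [stateDistFrom]; positivity, by simp [stateDistFrom]⟩
  | succ t ih => exact isDistrib_stepDist M hπ ih

theorem stateDist_eq_sum_mul_stateDistFrom [DecidableEq S] (π : S → A → ℝ) (t : ℕ) (s : S) :
    stateDist M π t s = ∑ s₀, M.μ s₀ * stateDistFrom M π s₀ t s := by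
  induction t generalizing s with
  | zero => simp [stateDist, stateDistFrom]
  | succ t ih => exact (congrArg (stepDist M π · s) (funext ih)).trans (stepDist_sum_mul M π _ _ s)

theorem Jret_eq_sum_mul_Vval [DecidableEq S] {π : S → A → ℝ} (hπ : IsPolicy π) :
    Jret M π = ∑ s₀, M.μ s₀ * Vval M π s₀ := by
  have hV : ∀ s₀, Summable fun t =>
      M.γ ^ t * ∑ s, stateDistFrom M π s₀ t s * ∑ a, π s a * M.r s a := fun s₀ =>
    summable_geometric_mul_sum_mul M.γ_nonneg M.γ_lt_one (isDistrib_stateDistFrom M hπ s₀) _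
  simp only [Jret, Vval, ← tsum_mul_left]
  rw [← Summable.tsum_finsetSum fun s₀ _ => (hV s₀).mul_left _]
  refine tsum_congr fun t => ?_
  simp only [stateDist_eq_sum_mul_stateDistFrom M π t, sum_mul]
  rw [sum_comm, mul_sum]
  refine sum_congr rfl fun s₀ _ => ?_
  simp only [mul_sum, mul_assoc, mul_left_comm (M.γ ^ t)]

theorem sum_dVisit_mul {π : S → A → ℝ} (hπ : IsPolicy π) (f : S → ℝ) :
    ∑ s, dVisit M π s * f s = (1 - M.γ) * ∑' t, M.γ ^ t * ∑ s, stateDist M π t s * f s := by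
  have hd : ∀ s, Summable fun t => M.γ ^ t * stateDist M π t s := fun s =>
    summable_geometric_mul_of_abs_le M.γ_nonneg M.γ_lt_one fun t =>
      (isDistrib_stateDist M hπ t).abs_le_one s
  simp only [dVisit, mul_assoc, ← mul_sum, ← tsum_mul_right]
  rw [← Summable.tsum_finsetSum fun s _ => by simpa only [mul_assoc] using (hd s).mul_right (f s)]
  simp only [mul_sum]

theorem sum_policy_mul_Adv [DecidableEq S] {π' : S → A → ℝ} (hπ' : IsPolicy π')
    (π : S → A → ℝ) (s : S) :
    ∑ a, π' s a * Adv M π s a =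
      ∑ a, π' s a * M.r s a + M.γ * ∑ a, π' s a * ∑ s', M.P s a s' * Vval M π s' - Vval M π s := by
  simp only [Adv, Qval, mul_sub, mul_add, sum_sub_distrib, sum_add_distrib, ← sum_mul, hπ'.2,
    one_mul, mul_left_comm _ M.γ, ← mul_sum]

theorem sum_mul_sum_policy_mul_Adv [DecidableEq S] {π' : S → A → ℝ} (hπ' : IsPolicy π')
    (π : S → A → ℝ) (d : S → ℝ) :
    ∑ s, d s * ∑ a, π' s a * Adv M π s a =
      ∑ s, d s * ∑ a, π' s a * M.r s a + M.γ * ∑ s, stepDist M π' d s * Vval M π s -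
        ∑ s, d s * Vval M π s := by
  simp only [sum_policy_mul_Adv M hπ', sum_stepDist_mul, mul_sub, mul_add, sum_sub_distrib,
    sum_add_distrib, mul_left_comm _ M.γ, ← mul_sum]

end Evolution

/-- Performance difference lemma (Kakade & Langford). -/
theorem performance_difference (M : FinMDP S A) (π' π : S → A → ℝ)
    (hπ' : IsPolicy π') (hπ : IsPolicy π) :
    Jret M π' - Jret M π =
      (1 / (1 - M.γ)) * ∑ s, dVisit M π' s * ∑ a, π' s a * Adv M π s a := by
  have hγ : 1 - M.γ ≠ 0 := by linarith [M.γ_lt_one]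
  have hsum := summable_geometric_mul_sum_mul M.γ_nonneg M.γ_lt_one (isDistrib_stateDist M hπ')
  have hstep : ∀ t, ∑ s, stateDist M π' t s * ∑ a, π' s a * Adv M π s a =
      ∑ s, stateDist M π' t s * ∑ a, π' s a * M.r s a +
        M.γ * ∑ s, stateDist M π' (t + 1) s * Vval M π s - ∑ s, stateDist M π' t s * Vval M π s :=
    fun t => sum_mul_sum_policy_mul_Adv M hπ' π _
  simp only [sum_dVisit_mul M hπ', hstep]
  rw [tsum_geometric_mul_add_sub (hsum _) (hsum _), Jret_eq_sum_mul_Vval M hπ]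
  field_simp
  rfl
end
end

section
/- Telescoping form of the performance difference: For any two policies π' and π, J(π') − J(π) = E_{τ∼π', s_0∼μ}[Σ_{t=0}^∞ γ^t A_π(s_t, a_t)]. -/
open Finset

set_option linter.unusedSectionVars false

noncomputable section

variable {S A : Type*} [Fintype S] [Fintype A] [DecidableEq S]

section Aux

variable (M : FinMDP S A)

lemma stepDist_sum' {π : S → A → ℝ} (hπ : IsPolicy π) (d : S → ℝ) :
    ∑ s', stepDist M π d s' = ∑ s, d s := by
  unfold stepDist
  rw [Finset.sum_comm]
  refine Finset.sum_congr rfl fun s _ => ?_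
  rw [Finset.sum_comm]
  calc ∑ a, ∑ s', d s * π s a * M.P s a s'
      = ∑ a, d s * π s a := by
        refine Finset.sum_congr rfl fun a _ => ?_
        rw [← Finset.mul_sum, M.P_sum, mul_one]
    _ = d s := by rw [← Finset.mul_sum, hπ.2, mul_one]

lemma stepDist_nonneg' {π : S → A → ℝ} (hπ : IsPolicy π) {d : S → ℝ}
    (hd : ∀ s, 0 ≤ d s) (s' : S) : 0 ≤ stepDist M π d s' :=
  Finset.sum_nonneg fun s _ => Finset.sum_nonneg fun a _ =>
    mul_nonneg (mul_nonneg (hd s) (hπ.1 s a)) (M.P_nonneg s a s')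

lemma stepDist_apply_sum (π : S → A → ℝ) (d : S → ℝ) (f : S → ℝ) :
    ∑ s', stepDist M π d s' * f s' =
      ∑ s, d s * ∑ a, π s a * ∑ s', M.P s a s' * f s' := by
  unfold stepDist
  simp only [Finset.sum_mul, Finset.mul_sum]
  rw [Finset.sum_comm]
  refine Finset.sum_congr rfl fun s _ => ?_
  rw [Finset.sum_comm]
  refine Finset.sum_congr rfl fun a _ => ?_
  refine Finset.sum_congr rfl fun s' _ => ?_
  ring

lemma stepDist_mix (π : S → A → ℝ) (c : S → ℝ) (e : S → S → ℝ) (s' : S) :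
    stepDist M π (fun s => ∑ s₀, c s₀ * e s₀ s) s' =
      ∑ s₀, c s₀ * stepDist M π (e s₀) s' := by
  unfold stepDist
  simp only [Finset.sum_mul, Finset.mul_sum]
  refine ((Finset.sum_congr rfl fun s _ => Finset.sum_comm).trans ?_)
  rw [Finset.sum_comm]
  exact Finset.sum_congr rfl fun s₀ _ => Finset.sum_congr rfl fun s _ =>
    Finset.sum_congr rfl fun a _ => by ring

lemma stateDist_nonneg {π : S → A → ℝ} (hπ : IsPolicy π) :
    ∀ t s, 0 ≤ stateDist M π t s
  | 0, s => M.μ_nonneg s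
  | t + 1, s => stepDist_nonneg' M hπ (stateDist_nonneg hπ t) s

lemma stateDist_sum {π : S → A → ℝ} (hπ : IsPolicy π) :
    ∀ t, ∑ s, stateDist M π t s = 1
  | 0 => M.μ_sum
  | t + 1 => by
    rw [show stateDist M π (t+1) = stepDist M π (stateDist M π t) from rfl,
      stepDist_sum' M hπ, stateDist_sum hπ t]

lemma stateDistFrom_nonneg {π : S → A → ℝ} (hπ : IsPolicy π) (s₀ : S) :
    ∀ t s, 0 ≤ stateDistFrom M π s₀ t s
  | 0, s => by unfold stateDistFrom; positivity
  | t + 1, s => stepDist_nonneg' M hπ (stateDistFrom_nonneg hπ s₀ t) s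

lemma stateDistFrom_sum {π : S → A → ℝ} (hπ : IsPolicy π) (s₀ : S) :
    ∀ t, ∑ s, stateDistFrom M π s₀ t s = 1
  | 0 => by simp [stateDistFrom]
  | t + 1 => by
    rw [show stateDistFrom M π s₀ (t+1) = stepDist M π (stateDistFrom M π s₀ t) from rfl,
      stepDist_sum' M hπ, stateDistFrom_sum hπ s₀ t]

lemma weighted_bound {d f : S → ℝ} (hd : ∀ s, 0 ≤ d s) (hd1 : ∑ s, d s = 1) :
    |∑ s, d s * f s| ≤ ∑ s, |f s| := by
  calc |∑ s, d s * f s| ≤ ∑ s, |d s * f s| := Finset.abs_sum_le_sum_abs _ _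
    _ = ∑ s, d s * |f s| := by
        refine Finset.sum_congr rfl fun s _ => ?_
        rw [abs_mul, abs_of_nonneg (hd s)]
    _ ≤ ∑ s, 1 * |f s| := by
        refine Finset.sum_le_sum fun s _ => ?_
        have h1 : d s ≤ 1 := hd1 ▸ Finset.single_le_sum (fun s _ => hd s) (Finset.mem_univ s)
        exact mul_le_mul_of_nonneg_right h1 (abs_nonneg _)
    _ = ∑ s, |f s| := by simp

lemma summable_geom_bound {g : ℕ → ℝ} {C : ℝ} (hC : ∀ t, |g t| ≤ C) :
    Summable (fun t => M.γ ^ t * g t) := by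
  apply Summable.of_abs
  refine Summable.of_nonneg_of_le (fun t => abs_nonneg _) (fun t => ?_)
    ((summable_geometric_of_lt_one M.γ_nonneg M.γ_lt_one).mul_right C)
  rw [abs_mul, abs_pow, abs_of_nonneg M.γ_nonneg]
  exact mul_le_mul_of_nonneg_left (hC t) (pow_nonneg M.γ_nonneg t)

lemma stateDist_eq_mix (π : S → A → ℝ) :
    ∀ t s, stateDist M π t s = ∑ s₀, M.μ s₀ * stateDistFrom M π s₀ t s
  | 0, s => by
    simp [stateDist, stateDistFrom, mul_ite, mul_one, mul_zero, Finset.sum_ite_eq]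
  | t + 1, s => by
    have h : stateDist M π t = fun s => ∑ s₀, M.μ s₀ * stateDistFrom M π s₀ t s :=
      funext fun s => stateDist_eq_mix π t s
    show stepDist M π (stateDist M π t) s = _
    rw [h, stepDist_mix]
    rfl

lemma Jret_eq_sum_V {π : S → A → ℝ} (hπ : IsPolicy π) :
    Jret M π = ∑ s₀, M.μ s₀ * Vval M π s₀ := by
  have key : ∀ t : ℕ, M.γ ^ t * ∑ s, stateDist M π t s * ∑ a, π s a * M.r s a
      = ∑ s₀, M.μ s₀ * (M.γ ^ t * ∑ s, stateDistFrom M π s₀ t s * ∑ a, π s a * M.r s a) := by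
    intro t
    rw [show (∑ s, stateDist M π t s * ∑ a, π s a * M.r s a)
        = ∑ s₀, M.μ s₀ * ∑ s, stateDistFrom M π s₀ t s * ∑ a, π s a * M.r s a from ?_]
    · rw [Finset.mul_sum]
      refine Finset.sum_congr rfl fun s₀ _ => by ring
    · calc ∑ s, stateDist M π t s * ∑ a, π s a * M.r s a
          = ∑ s, ∑ s₀, M.μ s₀ * stateDistFrom M π s₀ t s * ∑ a, π s a * M.r s a := by
            refine Finset.sum_congr rfl fun s _ => ?_
            rw [stateDist_eq_mix, Finset.sum_mul]
        _ = ∑ s₀, ∑ s, M.μ s₀ * stateDistFrom M π s₀ t s * ∑ a, π s a * M.r s a :=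
            Finset.sum_comm
        _ = ∑ s₀, M.μ s₀ * ∑ s, stateDistFrom M π s₀ t s * ∑ a, π s a * M.r s a := by
            refine Finset.sum_congr rfl fun s₀ _ => ?_
            rw [Finset.mul_sum]
            exact Finset.sum_congr rfl fun s _ => by ring
  unfold Jret
  rw [tsum_congr key, Summable.tsum_finsetSum]
  · refine Finset.sum_congr rfl fun s₀ _ => ?_
    rw [tsum_mul_left]
    rfl
  · intro s₀ _
    apply Summable.mul_left
    exact summable_geom_bound M fun t =>
      weighted_bound (stateDistFrom_nonneg M hπ s₀ t) (stateDistFrom_sum M hπ s₀ t)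

end Aux

/-- Telescoping form of the performance difference. -/
theorem performance_difference_telescoping (M : FinMDP S A) (π' π : S → A → ℝ)
    (hπ' : IsPolicy π') (hπ : IsPolicy π) :
    Jret M π' - Jret M π =
      ∑' t : ℕ, M.γ ^ t * ∑ s, stateDist M π' t s * ∑ a, π' s a * Adv M π s a := by
  classical
  -- per-state expansion of the advantage expectation
  have adv_exp : ∀ s : S, ∑ a, π' s a * Adv M π s a
      = (∑ a, π' s a * M.r s a)
        + M.γ * (∑ a, π' s a * ∑ s', M.P s a s' * Vval M π s') - Vval M π s := by
    intro s
    have h1 : ∑ a, π' s a * Adv M π s a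
        = (∑ a, π' s a * Qval M π s a) - (∑ a, π' s a) * Vval M π s := by
      rw [Finset.sum_mul, ← Finset.sum_sub_distrib]
      exact Finset.sum_congr rfl fun a _ => by rw [Adv]; ring
    rw [h1, hπ'.2, one_mul]
    congr 1
    simp only [Qval, mul_add]
    rw [Finset.sum_add_distrib, Finset.mul_sum]
    congr 1
    exact Finset.sum_congr rfl fun a _ => by ring
  set W : ℕ → ℝ := fun t => M.γ ^ t * ∑ s, stateDist M π' t s * Vval M π s with hW
  set F : ℕ → ℝ := fun t =>
    M.γ ^ t * ∑ s, stateDist M π' t s * ∑ a, π' s a * M.r s a with hF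
  -- the telescoping identity, per time step
  have key : ∀ t : ℕ, M.γ ^ t * ∑ s, stateDist M π' t s * ∑ a, π' s a * Adv M π s a
      = F t + W (t + 1) - W t := by
    intro t
    have hstep : ∑ s', stateDist M π' (t+1) s' * Vval M π s'
        = ∑ s, stateDist M π' t s * ∑ a, π' s a * ∑ s', M.P s a s' * Vval M π s' := by
      rw [show stateDist M π' (t+1) = stepDist M π' (stateDist M π' t) from rfl]
      exact stepDist_apply_sum M π' _ (Vval M π)
    have hmain : ∑ s, stateDist M π' t s * ∑ a, π' s a * Adv M π s a
        = (∑ s, stateDist M π' t s * ∑ a, π' s a * M.r s a)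
          + M.γ * (∑ s', stateDist M π' (t+1) s' * Vval M π s')
          - ∑ s, stateDist M π' t s * Vval M π s := by
      rw [hstep, Finset.mul_sum, ← Finset.sum_add_distrib, ← Finset.sum_sub_distrib]
      refine Finset.sum_congr rfl fun s _ => ?_
      rw [adv_exp s]
      ring
    rw [hmain, hF, hW]
    simp only [pow_succ]
    ring
  -- summability
  have hd' : ∀ t, (∀ s, 0 ≤ stateDist M π' t s) ∧ ∑ s, stateDist M π' t s = 1 :=
    fun t => ⟨stateDist_nonneg M hπ' t, stateDist_sum M hπ' t⟩
  have hWs : Summable W :=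
    summable_geom_bound M fun t => weighted_bound (hd' t).1 (hd' t).2
  have hWs' : Summable (fun t => W (t + 1)) := (summable_nat_add_iff 1).2 hWs
  have hFs : Summable F :=
    summable_geom_bound M fun t => weighted_bound (hd' t).1 (hd' t).2
  have htel : ∑' t : ℕ, (F t + W (t + 1) - W t) = (∑' t, F t) - W 0 := by
    rw [Summable.tsum_sub (hFs.add hWs') hWs, Summable.tsum_add hFs hWs', Summable.tsum_eq_zero_add hWs]
    ring
  have hJ' : Jret M π' = ∑' t, F t := rfl
  have hW0 : W 0 = Jret M π := by
    rw [hW]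
    simp only [pow_zero, one_mul]
    rw [Jret_eq_sum_V M hπ]
    rfl
  rw [tsum_congr key, htel, ← hJ', hW0]
end
end

section
/- V-trace is a contraction: Let β be a behavior policy with β(a|s) > 0 for all (s,a), and define the V-trace operator RV(s) = V(s) + E_{τ∼β}[ Σ_{t≥0} γ^t (c_0⋯c_{t−1}) ρ_t (r_t + γ V(s_{t+1}) − V(s_t)) | s_0 = s ] with truncated importance weights c_i = min(c̄, π(a_i|s_i)/β(a_i|s_i)), ρ_t = min(ρ̄, π(a_t|s_t)/β(a_t|s_t)), ρ̄ ≥ c̄ ≥ 0. If there exists α ∈ (0,1] with E_{a∼β(s)}[ρ_0] ≥ α for all s, then R is an η-contraction in sup-norm with η = γ^{−1} − (γ^{−1}−1) E_{τ∼β}[Σ_{t≥0} γ^t (Π_{i=0}^{t−2} c_i) ρ_{t−1}] ≤ 1 − (1−γ)α < 1, using the convention c_{−1} = ρ_{−1} = 1. -/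
open Finset

noncomputable section

variable {S A : Type*} [Fintype S] [Fintype A] [DecidableEq S]

/-- Truncated importance weight `c_i = min(c̄, π(a|s)/β(a|s))`. -/
def cw (π β : S → A → ℝ) (cbar : ℝ) (s : S) (a : A) : ℝ := min cbar (π s a / β s a)

/-- Truncated importance weight `ρ_t = min(ρ̄, π(a|s)/β(a|s))`. -/
def ρw (π β : S → A → ℝ) (ρbar : ℝ) (s : S) (a : A) : ℝ := min ρbar (π s a / β s a)

/-- `E_{τ∼β}[(c₀⋯c_{t−1}) ρ_t (r_t + γ V(s_{t+1}) − V(s_t)) | s₀ = s]`. -/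
def vtraceTerm (M : FinMDP S A) (π β : S → A → ℝ) (cbar ρbar : ℝ) (V : S → ℝ) :
    ℕ → S → ℝ
  | 0, s => ∑ a, β s a * ρw π β ρbar s a *
      (M.r s a + M.γ * (∑ s', M.P s a s' * V s') - V s)
  | t + 1, s => ∑ a, β s a * cw π β cbar s a *
      ∑ s', M.P s a s' * vtraceTerm M π β cbar ρbar V t s'

/-- The V-trace operator `R V (s) = V(s) + ∑_t γ^t E[(c₀⋯c_{t−1}) ρ_t δ_t V]`. -/
def vtraceOp (M : FinMDP S A) (π β : S → A → ℝ) (cbar ρbar : ℝ) (V : S → ℝ) : S → ℝ :=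
  fun s => V s + ∑' t : ℕ, M.γ ^ t * vtraceTerm M π β cbar ρbar V t s

/-- `E_{τ∼β}[(∏_{i=0}^{t−2} c_i) ρ_{t−1} | s₀ = s]`, with the convention `c₋₁ = ρ₋₁ = 1`. -/
def etaW (M : FinMDP S A) (π β : S → A → ℝ) (cbar ρbar : ℝ) : ℕ → S → ℝ
  | 0, _ => 1
  | 1, s => ∑ a, β s a * ρw π β ρbar s a
  | t + 2, s => ∑ a, β s a * cw π β cbar s a *
      ∑ s', M.P s a s' * etaW M π β cbar ρbar (t + 1) s'

/-!
Write `W = V₁ - V₂`, let `T_c` and `T_ρ` (`truncatedTransition` at `c̄` and `ρ̄`) be the one-step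
operators of the behaviour chain weighted by the truncated ratios `c` and `ρ`, and let
`ρ̄ = E_{a∼β} ρ`. The reward cancels, so
`vtraceOp V₁ - vtraceOp V₂ = W + ∑ γ^t T_c^t (γ T_ρ W - ρ̄ W)`, and regrouping the sum gives
`(1 - ρ̄) W + ∑ γ^(t+1) T_c^t (T_ρ W - T_c (ρ̄ W))`. Since `c ≤ ρ` and `ρ̄ ≤ 1`, each summand is a
positive operator applied to `W`, so it is bounded by the same expression evaluated at the constant
`‖W‖∞`. These bounds telescope to `‖W‖∞ ∑ γ^t (η_t - η_(t+1)) = ‖W‖∞ (γ⁻¹ - (γ⁻¹ - 1) ∑ γ^t η_t)`,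
with `η_t = etaW t`. Finally `∑ γ^t η_t ≥ 1 + γ ρ̄ ≥ 1 + γ α`, which gives `1 - (1 - γ) α`.
-/

theorem summable_pow_mul_of_abs_le {γ B : ℝ} (hγ0 : 0 ≤ γ) (hγ1 : γ < 1) {u : ℕ → ℝ}
    (hu : ∀ t, |u t| ≤ B) : Summable fun t => γ ^ t * u t := by
  refine Summable.of_norm_bounded ((summable_geometric_of_lt_one hγ0 hγ1).mul_right B) fun t => ?_
  rw [Real.norm_eq_abs, abs_mul, abs_pow, abs_of_nonneg hγ0]
  exact mul_le_mul_of_nonneg_left (hu t) (pow_nonneg hγ0 t)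

theorem tsum_pow_mul_eq_zero_add {γ : ℝ} {x : ℕ → ℝ} (hx : Summable fun t => γ ^ t * x t) :
    ∑' t, γ ^ t * x t = x 0 + γ * ∑' t, γ ^ t * x (t + 1) := by
  rw [hx.tsum_eq_zero_add, pow_zero, one_mul, ← tsum_mul_left]
  simp only [pow_succ, mul_comm _ γ, mul_assoc]

theorem tsum_pow_mul_sub_eq {γ B : ℝ} (hγ0 : 0 ≤ γ) (hγ1 : γ < 1) {u v : ℕ → ℝ}
    (hu : ∀ t, |u t| ≤ B) (hv : ∀ t, |v t| ≤ B) :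
    ∑' t, γ ^ t * (γ * u t - v t) = -v 0 + ∑' t, γ ^ t * (γ * (u t - v (t + 1))) := by
  have hsu := summable_pow_mul_of_abs_le hγ0 hγ1 hu
  have hsv := summable_pow_mul_of_abs_le hγ0 hγ1 hv
  have hsv' := summable_pow_mul_of_abs_le hγ0 hγ1 fun t => hv (t + 1)
  have hlhs : ∑' t, γ ^ t * (γ * u t - v t) = γ * ∑' t, γ ^ t * u t - ∑' t, γ ^ t * v t := by
    rw [← tsum_mul_left, ← (hsu.mul_left γ).tsum_sub hsv]
    exact tsum_congr fun t => by ring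
  have hrhs : ∑' t, γ ^ t * (γ * (u t - v (t + 1))) =
      γ * ∑' t, γ ^ t * u t - γ * ∑' t, γ ^ t * v (t + 1) := by
    rw [← tsum_mul_left, ← tsum_mul_left, ← (hsu.mul_left γ).tsum_sub (hsv'.mul_left γ)]
    exact tsum_congr fun t => by ring
  rw [hlhs, hrhs, tsum_pow_mul_eq_zero_add hsv]
  ring

theorem tsum_pow_mul_sub_succ_eq {γ B : ℝ} (hγ0 : 0 < γ) (hγ1 : γ < 1) {e : ℕ → ℝ}
    (he : ∀ t, |e t| ≤ B) :
    ∑' t, γ ^ t * (e t - e (t + 1)) = γ⁻¹ * e 0 - (γ⁻¹ - 1) * ∑' t, γ ^ t * e t := by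
  have hs := summable_pow_mul_of_abs_le hγ0.le hγ1 he
  have hs' := summable_pow_mul_of_abs_le hγ0.le hγ1 fun t => he (t + 1)
  simp only [mul_sub]
  rw [hs.tsum_sub hs', tsum_pow_mul_eq_zero_add hs]
  field_simp
  ring

theorem abs_add_tsum_pow_mul_sub_le {γ B w : ℝ} (hγ0 : 0 ≤ γ) (hγ1 : γ < 1) {u v e : ℕ → ℝ}
    (hu : ∀ t, |u t| ≤ B) (hv : ∀ t, |v t| ≤ B) (he : ∀ t, |e t| ≤ B)
    (h₀ : |w - v 0| ≤ e 0 - e 1) (h : ∀ t, |u t - v (t + 1)| ≤ e (t + 1) - e (t + 2)) :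
    |w + ∑' t, γ ^ t * (γ * u t - v t)| ≤ ∑' t, γ ^ t * (e t - e (t + 1)) := by
  have hde : ∀ t, |e t - e (t + 1)| ≤ B + B :=
    fun t => (abs_sub _ _).trans (add_le_add (he _) (he _))
  have hs := summable_pow_mul_of_abs_le hγ0 hγ1 hde
  have htail : |∑' t, γ ^ t * (γ * (u t - v (t + 1)))| ≤
      γ * ∑' t, γ ^ t * (e (t + 1) - e (t + 1 + 1)) := by
    have hg := (summable_pow_mul_of_abs_le hγ0 hγ1 fun t => hde (t + 1)).mul_left γ |>.hasSum
    rw [tsum_mul_left] at hg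
    rw [← Real.norm_eq_abs]
    refine tsum_of_norm_bounded hg fun t => ?_
    rw [Real.norm_eq_abs, abs_mul, abs_mul, abs_pow, abs_of_nonneg hγ0, mul_left_comm]
    gcongr
    exact h t
  rw [tsum_pow_mul_sub_eq hγ0 hγ1 hu hv, ← add_assoc, ← sub_eq_add_neg,
    tsum_pow_mul_eq_zero_add hs]
  exact (abs_add_le _ _).trans (add_le_add h₀ htail)

theorem Module.End.monotone_pow {E : Type*} [AddCommMonoid E] [Preorder E] [Module ℝ E]
    {L : Module.End ℝ E} (hL : Monotone L) (t : ℕ) : Monotone (L ^ t) := by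
  rw [Module.End.coe_pow]
  exact hL.iterate t

theorem abs_apply_le_of_monotone {X : Type*} {L : Module.End ℝ (X → ℝ)} (hL : Monotone L)
    {f g : X → ℝ} (h : ∀ x, |f x| ≤ g x) (x : X) : |L f x| ≤ L g x := by
  have hlow := hL (show -g ≤ f from fun x => neg_le_of_abs_le (h x))
  have hup := hL (show f ≤ g from fun x => le_of_abs_le (h x))
  rw [map_neg] at hlow
  exact abs_le.2 ⟨hlow x, hup x⟩

section

variable {S A : Type*} [Fintype S] [Fintype A]

def weightedTransition (P : S → A → S → ℝ) (w : S → A → ℝ) : Module.End ℝ (S → ℝ) where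
  toFun f s := ∑ a, w s a * ∑ s', P s a s' * f s'
  map_add' _ _ := by
    ext s
    simp only [Pi.add_apply, mul_add, sum_add_distrib]
  map_smul' _ _ := by
    ext s
    simp only [Pi.smul_apply, smul_eq_mul, RingHom.id_apply, mul_sum]
    exact sum_congr rfl fun a _ => sum_congr rfl fun s' _ => by ring

variable {P : S → A → S → ℝ} {w : S → A → ℝ}

@[simp]
theorem weightedTransition_apply (f : S → ℝ) (s : S) :
    weightedTransition P w f s = ∑ a, w s a * ∑ s', P s a s' * f s' :=
  rfl

theorem weightedTransition_add (w₁ w₂ : S → A → ℝ) :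
    weightedTransition P (w₁ + w₂) = weightedTransition P w₁ + weightedTransition P w₂ := by
  ext f s
  simp only [weightedTransition_apply, LinearMap.add_apply, Pi.add_apply, add_mul,
    sum_add_distrib]

theorem weightedTransition_const (hP : ∀ s a, ∑ s', P s a s' = 1) (c : ℝ) (s : S) :
    weightedTransition P w (fun _ => c) s = (∑ a, w s a) * c := by
  simp only [weightedTransition_apply, ← sum_mul, hP, one_mul]

theorem monotone_weightedTransition (hP : ∀ s a s', 0 ≤ P s a s') (hw : ∀ s a, 0 ≤ w s a) :
    Monotone (weightedTransition P w) := fun _ _ hfg s =>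
  sum_le_sum fun a _ => mul_le_mul_of_nonneg_left
    (sum_le_sum fun s' _ => mul_le_mul_of_nonneg_left (hfg s') (hP s a s')) (hw s a)

theorem abs_weightedTransition_pow_apply_le (hP : ∀ s a s', 0 ≤ P s a s')
    (hP1 : ∀ s a, ∑ s', P s a s' = 1) (hw : ∀ s a, 0 ≤ w s a) (hw1 : ∀ s, ∑ a, w s a ≤ 1)
    {f : S → ℝ} {K : ℝ} (hf : ∀ s, |f s| ≤ K) (t : ℕ) (s : S) :
    |(weightedTransition P w ^ t) f s| ≤ K := by
  induction t generalizing s with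
  | zero => simpa using hf s
  | succ t ih =>
    rw [pow_succ', Module.End.mul_apply]
    calc _ ≤ weightedTransition P w (fun _ => K) s :=
          abs_apply_le_of_monotone (monotone_weightedTransition hP hw) ih s
      _ = (∑ a, w s a) * K := weightedTransition_const hP1 K s
      _ ≤ K := mul_le_of_le_one_left ((abs_nonneg _).trans (hf s)) (hw1 s)

theorem summable_pow_mul_weightedTransition_pow_apply (hP : ∀ s a s', 0 ≤ P s a s')
    (hP1 : ∀ s a, ∑ s', P s a s' = 1) (hw : ∀ s a, 0 ≤ w s a) (hw1 : ∀ s, ∑ a, w s a ≤ 1)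
    {γ : ℝ} (hγ0 : 0 ≤ γ) (hγ1 : γ < 1) (f : S → ℝ) (s : S) :
    Summable fun t => γ ^ t * (weightedTransition P w ^ t) f s :=
  summable_pow_mul_of_abs_le hγ0 hγ1 fun t => abs_weightedTransition_pow_apply_le hP hP1 hw hw1
    (fun s' => single_le_sum (f := fun x => |f x|) (fun _ _ => abs_nonneg _) (mem_univ s')) t s

theorem abs_weightedTransition_sub_mul_le (hP : ∀ s a s', 0 ≤ P s a s') {w₁ w₂ : S → A → ℝ}
    (hw₂ : ∀ s a, 0 ≤ w₂ s a) (hw : ∀ s a, w₂ s a ≤ w₁ s a) {g : S → ℝ} (hg : ∀ s, g s ≤ 1)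
    {f : S → ℝ} {K : ℝ} (hf : ∀ s, |f s| ≤ K) (s : S) :
    |weightedTransition P w₁ f s - weightedTransition P w₂ (g * f) s| ≤
      weightedTransition P w₁ (fun _ => K) s - weightedTransition P w₂ (g * fun _ => K) s := by
  have hsplit : ∀ x : S → ℝ, weightedTransition P w₁ x s - weightedTransition P w₂ (g * x) s =
      weightedTransition P (w₁ - w₂) x s + weightedTransition P w₂ (x - g * x) s := by
    intro x
    rw [← sub_add_cancel w₁ w₂, weightedTransition_add, sub_add_cancel, map_sub]
    simp only [LinearMap.add_apply, Pi.add_apply, Pi.sub_apply]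
    ring
  have hdiff := abs_apply_le_of_monotone
    (monotone_weightedTransition hP fun s a => sub_nonneg.2 (hw s a)) hf s
  have hrest := abs_apply_le_of_monotone (monotone_weightedTransition hP hw₂)
    (f := f - g * f) (g := (fun _ => K) - g * fun _ => K) (fun x => by
      simp only [Pi.sub_apply, Pi.mul_apply, ← one_sub_mul, abs_mul]
      rw [abs_of_nonneg (sub_nonneg.2 (hg x))]
      exact mul_le_mul_of_nonneg_left (hf x) (sub_nonneg.2 (hg x))) s
  rw [hsplit, hsplit]
  exact (abs_add_le _ _).trans (add_le_add hdiff hrest)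

end

section

variable {S A : Type*} {π β : S → A → ℝ}

theorem ρw_nonneg (hπ : ∀ s a, 0 ≤ π s a) (hβ : ∀ s a, 0 ≤ β s a) {c : ℝ} (hc : 0 ≤ c)
    (s : S) (a : A) : 0 ≤ ρw π β c s a :=
  le_min hc (div_nonneg (hπ s a) (hβ s a))

theorem mul_ρw_le (hπ : ∀ s a, 0 ≤ π s a) (hβ : ∀ s a, 0 ≤ β s a) (c : ℝ) (s : S) (a : A) :
    β s a * ρw π β c s a ≤ π s a := by
  rcases (hβ s a).eq_or_lt with h | h
  · rw [← h, zero_mul]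
    exact hπ s a
  · calc β s a * ρw π β c s a ≤ β s a * (π s a / β s a) :=
          mul_le_mul_of_nonneg_left (min_le_right _ _) h.le
      _ = π s a := mul_div_cancel₀ _ h.ne'

variable [Fintype A]

theorem sum_mul_ρw_le_one (hπ : IsPolicy π) (hβ : ∀ s a, 0 ≤ β s a) (c : ℝ) (s : S) :
    ∑ a, β s a * ρw π β c s a ≤ 1 :=
  (sum_le_sum fun a _ => mul_ρw_le hπ.1 hβ c s a).trans (hπ.2 s).le

variable [Fintype S] {M : FinMDP S A} {cbar ρbar : ℝ}

/-- As `cw π β c = ρw π β c`, this one operator serves both the `c̄`-traces and the `ρ̄`-step. -/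
def truncatedTransition (M : FinMDP S A) (π β : S → A → ℝ) (c : ℝ) : Module.End ℝ (S → ℝ) :=
  weightedTransition M.P fun s a => β s a * ρw π β c s a

theorem monotone_truncatedTransition (hπ : ∀ s a, 0 ≤ π s a) (hβ : ∀ s a, 0 ≤ β s a) {c : ℝ}
    (hc : 0 ≤ c) : Monotone (truncatedTransition M π β c) :=
  monotone_weightedTransition M.P_nonneg fun s a => mul_nonneg (hβ s a) (ρw_nonneg hπ hβ hc s a)

theorem abs_truncatedTransition_pow_apply_le (hπ : IsPolicy π) (hβ : ∀ s a, 0 ≤ β s a) {c : ℝ}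
    (hc : 0 ≤ c) {f : S → ℝ} {K : ℝ} (hf : ∀ s, |f s| ≤ K) (t : ℕ) (s : S) :
    |(truncatedTransition M π β c ^ t) f s| ≤ K :=
  abs_weightedTransition_pow_apply_le M.P_nonneg M.P_sum
    (fun s a => mul_nonneg (hβ s a) (ρw_nonneg hπ.1 hβ hc s a)) (sum_mul_ρw_le_one hπ hβ c) hf t s

theorem summable_pow_mul_truncatedTransition_pow_apply (hπ : IsPolicy π)
    (hβ : ∀ s a, 0 ≤ β s a) {c : ℝ} (hc : 0 ≤ c) (f : S → ℝ) (s : S) :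
    Summable fun t => M.γ ^ t * (truncatedTransition M π β c ^ t) f s :=
  summable_pow_mul_weightedTransition_pow_apply M.P_nonneg M.P_sum
    (fun s a => mul_nonneg (hβ s a) (ρw_nonneg hπ.1 hβ hc s a)) (sum_mul_ρw_le_one hπ hβ c)
    M.γ_nonneg M.γ_lt_one f s

theorem vtraceTerm_eq_pow_apply (V : S → ℝ) (t : ℕ) :
    vtraceTerm M π β cbar ρbar V t =
      (truncatedTransition M π β cbar ^ t) (vtraceTerm M π β cbar ρbar V 0) := by
  induction t with
  | zero => rfl
  | succ t ih =>
    rw [pow_succ', Module.End.mul_apply, ← ih]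
    rfl

theorem etaW_succ_eq_pow_apply (t : ℕ) :
    etaW M π β cbar ρbar (t + 1) =
      (truncatedTransition M π β cbar ^ t) (etaW M π β cbar ρbar 1) := by
  induction t with
  | zero => rfl
  | succ t ih =>
    rw [pow_succ', Module.End.mul_apply, ← ih]
    rfl

theorem vtraceTerm_zero_sub (V₁ V₂ : S → ℝ) :
    vtraceTerm M π β cbar ρbar V₁ 0 - vtraceTerm M π β cbar ρbar V₂ 0 =
      M.γ • truncatedTransition M π β ρbar (V₁ - V₂) - etaW M π β cbar ρbar 1 * (V₁ - V₂) := by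
  ext s
  simp only [vtraceTerm, etaW, truncatedTransition, weightedTransition_apply, Pi.sub_apply,
    Pi.smul_apply, Pi.mul_apply, smul_eq_mul]
  rw [← sum_sub_distrib, mul_sum, sum_mul, ← sum_sub_distrib]
  refine sum_congr rfl fun a _ => ?_
  simp only [mul_sub, sum_sub_distrib]
  ring

theorem etaW_mem_Icc (hπ : IsPolicy π) (hβ : ∀ s a, 0 ≤ β s a) (hc : 0 ≤ cbar)
    (hcρ : cbar ≤ ρbar) (t : ℕ) (s : S) : etaW M π β cbar ρbar t s ∈ Set.Icc 0 1 := by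
  have hone : ∀ s, etaW M π β cbar ρbar 1 s ∈ Set.Icc 0 1 := fun s =>
    ⟨sum_nonneg fun a _ => mul_nonneg (hβ s a) (ρw_nonneg hπ.1 hβ (hc.trans hcρ) s a),
      sum_mul_ρw_le_one hπ hβ ρbar s⟩
  cases t with
  | zero => exact ⟨zero_le_one, le_rfl⟩
  | succ t =>
    rw [etaW_succ_eq_pow_apply]
    refine ⟨?_, (le_abs_self _).trans (abs_truncatedTransition_pow_apply_le hπ hβ hc
      (fun s => abs_le.2 ⟨by linarith [(hone s).1], (hone s).2⟩) t s)⟩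
    simpa using Module.End.monotone_pow (monotone_truncatedTransition (M := M) hπ.1 hβ hc) t
      (show 0 ≤ etaW M π β cbar ρbar 1 from fun s => (hone s).1) s

theorem abs_truncatedTransition_sub_le (hπ : IsPolicy π) (hβ : ∀ s a, 0 ≤ β s a)
    (hc : 0 ≤ cbar) (hcρ : cbar ≤ ρbar) {W : S → ℝ} {K : ℝ} (hW : ∀ s, |W s| ≤ K) (s : S) :
    |truncatedTransition M π β ρbar W s -
        truncatedTransition M π β cbar (etaW M π β cbar ρbar 1 * W) s| ≤
      (K • (etaW M π β cbar ρbar 1 -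
        truncatedTransition M π β cbar (etaW M π β cbar ρbar 1))) s := by
  have h : |truncatedTransition M π β ρbar W s -
        truncatedTransition M π β cbar (etaW M π β cbar ρbar 1 * W) s| ≤
      truncatedTransition M π β ρbar (fun _ => K) s -
        truncatedTransition M π β cbar (etaW M π β cbar ρbar 1 * fun _ => K) s :=
    abs_weightedTransition_sub_mul_le M.P_nonneg
      (fun s a => mul_nonneg (hβ s a) (ρw_nonneg hπ.1 hβ hc s a))
      (fun s a => mul_le_mul_of_nonneg_left (min_le_min_right _ hcρ) (hβ s a))
      (fun s => (etaW_mem_Icc (M := M) hπ hβ hc hcρ 1 s).2) hW s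
  have hconst : truncatedTransition M π β ρbar (fun _ => K) s = etaW M π β cbar ρbar 1 s * K :=
    weightedTransition_const M.P_sum K s
  have hscale : (etaW M π β cbar ρbar 1 * fun _ => K) = K • etaW M π β cbar ρbar 1 := by
    ext x
    exact mul_comm _ _
  rw [hconst, hscale, map_smul] at h
  convert h using 1
  simp only [Pi.smul_apply, Pi.sub_apply, smul_eq_mul]
  ring

theorem vtraceOp_sub_eq (hπ : IsPolicy π) (hβ : ∀ s a, 0 ≤ β s a) (hc : 0 ≤ cbar)
    (V₁ V₂ : S → ℝ) (s : S) :
    vtraceOp M π β cbar ρbar V₁ s - vtraceOp M π β cbar ρbar V₂ s =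
      (V₁ - V₂) s + ∑' t, M.γ ^ t * (M.γ * (truncatedTransition M π β cbar ^ t)
          (truncatedTransition M π β ρbar (V₁ - V₂)) s -
        (truncatedTransition M π β cbar ^ t) (etaW M π β cbar ρbar 1 * (V₁ - V₂)) s) := by
  have hop : ∀ V, vtraceOp M π β cbar ρbar V s = V s + ∑' t, M.γ ^ t *
      (truncatedTransition M π β cbar ^ t) (vtraceTerm M π β cbar ρbar V 0) s := fun V => by
    simp only [vtraceOp]
    congr 1
    exact tsum_congr fun t => by rw [vtraceTerm_eq_pow_apply V t]
  have hsum := fun V => summable_pow_mul_truncatedTransition_pow_apply (M := M) hπ hβ hc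
    (vtraceTerm M π β cbar ρbar V 0) s
  rw [hop, hop, add_sub_add_comm, ← (hsum V₁).tsum_sub (hsum V₂)]
  congr 1
  refine tsum_congr fun t => ?_
  rw [← mul_sub, ← Pi.sub_apply, ← map_sub, vtraceTerm_zero_sub, map_sub, map_smul]
  rfl

theorem abs_truncatedTransition_pow_sub_le (hπ : IsPolicy π) (hβ : ∀ s a, 0 ≤ β s a)
    (hc : 0 ≤ cbar) (hcρ : cbar ≤ ρbar) {W : S → ℝ} {K : ℝ} (hW : ∀ s, |W s| ≤ K) (t : ℕ)
    (s : S) :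
    |(truncatedTransition M π β cbar ^ t) (truncatedTransition M π β ρbar W) s -
        (truncatedTransition M π β cbar ^ (t + 1)) (etaW M π β cbar ρbar 1 * W) s| ≤
      etaW M π β cbar ρbar (t + 1) s * K - etaW M π β cbar ρbar (t + 2) s * K := by
  rw [pow_succ, Module.End.mul_apply, ← Pi.sub_apply, ← map_sub]
  refine (abs_apply_le_of_monotone (Module.End.monotone_pow
    (monotone_truncatedTransition hπ.1 hβ hc) t)
    (abs_truncatedTransition_sub_le hπ hβ hc hcρ hW) s).trans_eq ?_
  rw [map_smul, map_sub, ← Module.End.mul_apply, ← pow_succ, ← etaW_succ_eq_pow_apply,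
    ← etaW_succ_eq_pow_apply]
  simp only [Pi.smul_apply, Pi.sub_apply, smul_eq_mul]
  ring

theorem abs_vtraceOp_sub_le (hπ : IsPolicy π) (hβ : ∀ s a, 0 ≤ β s a) (hγ : 0 < M.γ)
    (hc : 0 ≤ cbar) (hcρ : cbar ≤ ρbar) {V₁ V₂ : S → ℝ} {K : ℝ}
    (hK : ∀ s, |V₁ s - V₂ s| ≤ K) (s : S) :
    |vtraceOp M π β cbar ρbar V₁ s - vtraceOp M π β cbar ρbar V₂ s| ≤
      (M.γ⁻¹ - (M.γ⁻¹ - 1) * ∑' t, M.γ ^ t * etaW M π β cbar ρbar t s) * K := by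
  set η := etaW M π β cbar ρbar
  have hW : ∀ x, |(V₁ - V₂) x| ≤ K := hK
  have hK0 : 0 ≤ K := (abs_nonneg _).trans (hK s)
  have hη : ∀ t x, η t x ∈ Set.Icc 0 1 := etaW_mem_Icc hπ hβ hc hcρ
  have hηK : ∀ t, |η t s * K| ≤ K := fun t => by
    rw [abs_of_nonneg (mul_nonneg (hη t s).1 hK0)]
    exact mul_le_of_le_one_left hK0 (hη t s).2
  have hρW : ∀ x, |truncatedTransition M π β ρbar (V₁ - V₂) x| ≤ K := fun x => by
    simpa using abs_truncatedTransition_pow_apply_le (M := M) hπ hβ (hc.trans hcρ) hW 1 x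
  have hηW : ∀ x, |(η 1 * (V₁ - V₂)) x| ≤ K := fun x => by
    rw [Pi.mul_apply, abs_mul, abs_of_nonneg (hη 1 x).1]
    exact (mul_le_mul (hη 1 x).2 (hW x) (abs_nonneg _) zero_le_one).trans_eq (one_mul K)
  have h₀ : |(V₁ - V₂) s - (η 1 * (V₁ - V₂)) s| ≤ η 0 s * K - η 1 s * K := by
    rw [Pi.mul_apply, ← one_sub_mul, abs_mul, abs_of_nonneg (sub_nonneg.2 (hη 1 s).2),
      ← sub_mul]
    exact mul_le_mul_of_nonneg_left (hW s) (sub_nonneg.2 (hη 1 s).2)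
  rw [vtraceOp_sub_eq hπ hβ hc]
  refine (abs_add_tsum_pow_mul_sub_le hγ.le M.γ_lt_one
    (fun t => abs_truncatedTransition_pow_apply_le hπ hβ hc hρW t s)
    (fun t => abs_truncatedTransition_pow_apply_le hπ hβ hc hηW t s) hηK h₀
    (fun t => abs_truncatedTransition_pow_sub_le hπ hβ hc hcρ hW t s)).trans_eq ?_
  have hη0 : η 0 s = 1 := rfl
  rw [tsum_pow_mul_sub_succ_eq hγ M.γ_lt_one hηK, hη0]
  simp only [← mul_assoc, tsum_mul_right]
  ring

theorem inv_sub_mul_tsum_etaW_le (hπ : IsPolicy π) (hβ : ∀ s a, 0 ≤ β s a) (hγ : 0 < M.γ)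
    (hc : 0 ≤ cbar) (hcρ : cbar ≤ ρbar) (s : S) :
    M.γ⁻¹ - (M.γ⁻¹ - 1) * ∑' t, M.γ ^ t * etaW M π β cbar ρbar t s ≤
      1 - (1 - M.γ) * etaW M π β cbar ρbar 1 s := by
  have hη := etaW_mem_Icc (M := M) hπ hβ hc hcρ
  have hhead : 1 + M.γ * etaW M π β cbar ρbar 1 s ≤ ∑' t, M.γ ^ t * etaW M π β cbar ρbar t s := by
    have h := Summable.sum_le_tsum (range 2)
      (fun t _ => mul_nonneg (pow_nonneg M.γ_nonneg t) (hη t s).1)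
      (summable_pow_mul_of_abs_le M.γ_nonneg M.γ_lt_one (B := 1)
        fun t => abs_le.2 ⟨by linarith [(hη t s).1], (hη t s).2⟩)
    simpa [sum_range_succ, etaW] using h
  have hinv : 0 ≤ M.γ⁻¹ - 1 := sub_nonneg.2 ((one_le_inv₀ hγ).2 M.γ_lt_one.le)
  calc M.γ⁻¹ - (M.γ⁻¹ - 1) * ∑' t, M.γ ^ t * etaW M π β cbar ρbar t s
      ≤ M.γ⁻¹ - (M.γ⁻¹ - 1) * (1 + M.γ * etaW M π β cbar ρbar 1 s) := by
        gcongr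
    _ = 1 - (1 - M.γ) * etaW M π β cbar ρbar 1 s := by
        field_simp
        ring

end

theorem vtrace_contraction_general [Nonempty S] (M : FinMDP S A) (π β : S → A → ℝ)
    (hπ : IsPolicy π) (hβ : IsPolicy β)
    (hγ : 0 < M.γ) (cbar ρbar : ℝ) (hc : 0 ≤ cbar) (hcρ : cbar ≤ ρbar)
    (α : ℝ) (hα0 : 0 < α)
    (hαbd : ∀ s, α ≤ ∑ a, β s a * ρw π β ρbar s a) :
    (∀ V₁ V₂ : S → ℝ, ∀ s,
        |vtraceOp M π β cbar ρbar V₁ s - vtraceOp M π β cbar ρbar V₂ s| ≤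
          (univ.sup' univ_nonempty fun s' =>
              M.γ⁻¹ - (M.γ⁻¹ - 1) * ∑' t : ℕ, M.γ ^ t * etaW M π β cbar ρbar t s') *
            univ.sup' univ_nonempty fun s' => |V₁ s' - V₂ s'|) ∧
    (univ.sup' univ_nonempty fun s' =>
        M.γ⁻¹ - (M.γ⁻¹ - 1) * ∑' t : ℕ, M.γ ^ t * etaW M π β cbar ρbar t s')
      ≤ 1 - (1 - M.γ) * α ∧
    1 - (1 - M.γ) * α < 1 := by
  have hγ1 : 0 < 1 - M.γ := sub_pos.2 M.γ_lt_one
  refine ⟨fun V₁ V₂ s => ?_, sup'_le _ _ fun s _ => ?_, by nlinarith⟩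
  · have hK : ∀ x, |V₁ x - V₂ x| ≤ univ.sup' univ_nonempty fun s' => |V₁ s' - V₂ s'| :=
      fun x => le_sup' (fun s' => |V₁ s' - V₂ s'|) (mem_univ x)
    refine (abs_vtraceOp_sub_le hπ hβ.1 hγ hc hcρ hK s).trans ?_
    gcongr
    · exact (abs_nonneg _).trans (hK s)
    · exact le_sup' (fun s' => M.γ⁻¹ - (M.γ⁻¹ - 1) * ∑' t : ℕ, M.γ ^ t * etaW M π β cbar ρbar t s')
        (mem_univ s)
  · exact (inv_sub_mul_tsum_etaW_le hπ hβ.1 hγ hc hcρ s).trans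
      (sub_le_sub_left (mul_le_mul_of_nonneg_left (hαbd s) hγ1.le) 1)

/-- V-trace is an η-contraction in sup-norm, with `η ≤ 1 − (1−γ)α < 1`. -/
theorem vtrace_contraction [Nonempty S] (M : FinMDP S A) (π β : S → A → ℝ)
    (hπ : IsPolicy π) (hβ : IsPolicy β) (hβpos : ∀ s a, 0 < β s a)
    (hγ : 0 < M.γ) (cbar ρbar : ℝ) (hc : 0 ≤ cbar) (hcρ : cbar ≤ ρbar)
    (α : ℝ) (hα0 : 0 < α) (hα1 : α ≤ 1)
    (hαbd : ∀ s, α ≤ ∑ a, β s a * ρw π β ρbar s a) :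
    (∀ V₁ V₂ : S → ℝ, ∀ s,
        |vtraceOp M π β cbar ρbar V₁ s - vtraceOp M π β cbar ρbar V₂ s| ≤
          (univ.sup' univ_nonempty fun s' =>
              M.γ⁻¹ - (M.γ⁻¹ - 1) * ∑' t : ℕ, M.γ ^ t * etaW M π β cbar ρbar t s') *
            univ.sup' univ_nonempty fun s' => |V₁ s' - V₂ s'|) ∧
    (univ.sup' univ_nonempty fun s' =>
        M.γ⁻¹ - (M.γ⁻¹ - 1) * ∑' t : ℕ, M.γ ^ t * etaW M π β cbar ρbar t s')
      ≤ 1 - (1 - M.γ) * α ∧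
    1 - (1 - M.γ) * α < 1 :=
  vtrace_contraction_general M π β hπ hβ hγ cbar ρbar hc hcρ α hα0 hαbd
end
end

section
/- The fixed point of the V-trace operator is the value function of the ρ̄-truncated policy: V_{π_{ρ̄}} is a fixed point of R, where π_{ρ̄}(a|s) = min(ρ̄ β(a|s), π(a|s)) / Σ_{b∈A} min(ρ̄ β(b|s), π(b|s)). Specifically, for every state s, E_{a∼β(·|s)}[ min(ρ̄, π(a|s)/β(a|s)) (r(s,a) + γ Σ_{s'} P(s'|s,a) V_{π_{ρ̄}}(s') − V_{π_{ρ̄}}(s)) ] = 0. -/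
open Finset

noncomputable section

variable {S A : Type*} [Fintype S] [Fintype A] [DecidableEq S]

/-! Multiplying the truncated importance weight `min ρ̄ (π/β)` by `β` gives the unnormalised
truncated policy `min (ρ̄ β) π`, so the V-trace error at `s` is the `min (ρ̄ β) π`-weighted sum of
the residuals `Q a - V s`. The Bellman equation of `π_ρ̄` says that `V s` is exactly the
corresponding weighted mean of the `Q a`, and residuals about a weighted mean sum to zero. -/

theorem mul_min_div_eq_min {b : ℝ} (hb : 0 < b) (c x : ℝ) : b * min c (x / b) = min (c * b) x := by
  rw [mul_min_of_nonneg _ _ hb.le, mul_div_cancel₀ _ hb.ne', mul_comm]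

theorem sum_min_mul_pos {p q : A → ℝ} (hp_nonneg : ∀ a, 0 ≤ p a) (hp_pos : 0 < ∑ a, p a)
    (hq : ∀ a, 0 < q a) {c : ℝ} (hc : 0 < c) : 0 < ∑ a, min (c * q a) (p a) := by
  obtain ⟨a, -, ha⟩ : ∃ a ∈ univ, (0 : ℝ) < p a :=
    exists_lt_of_sum_lt (by simpa only [sum_const_zero] using hp_pos)
  exact sum_pos' (fun b _ => le_min (mul_pos hc (hq b)).le (hp_nonneg b))
    ⟨a, mem_univ a, lt_min (mul_pos hc (hq a)) ha⟩

theorem sum_mul_sub_weighted_mean_eq_zero {w Q : A → ℝ} {V : ℝ} (hw : ∑ a, w a ≠ 0)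
    (hV : V = ∑ a, (w a / ∑ b, w b) * Q a) : ∑ a, w a * (Q a - V) = 0 := by
  have hmean : (∑ a, w a) * V = ∑ a, w a * Q a := by
    rw [hV, mul_sum]
    exact sum_congr rfl fun a _ => by field_simp
  rw [sum_congr rfl fun a _ => mul_sub (w a) (Q a) V, sum_sub_distrib, ← sum_mul, hmean, sub_self]

theorem vtrace_fixed_point_general (M : FinMDP S A) (π β : S → A → ℝ)
    (hπ : IsPolicy π) (hβpos : ∀ s a, 0 < β s a)
    (ρbar : ℝ) (hρ : 0 < ρbar) (Vρ : S → ℝ)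
    (hBell : ∀ s, Vρ s = ∑ a,
        (min (ρbar * β s a) (π s a) / ∑ b, min (ρbar * β s b) (π s b)) *
          (M.r s a + M.γ * ∑ s', M.P s a s' * Vρ s')) :
    ∀ s, ∑ a, β s a * min ρbar (π s a / β s a) *
        (M.r s a + M.γ * (∑ s', M.P s a s' * Vρ s') - Vρ s) = 0 := by
  intro s
  have hnormaliser : 0 < ∑ a, min (ρbar * β s a) (π s a) :=
    sum_min_mul_pos (hπ.1 s) (by rw [hπ.2 s]; exact one_pos) (hβpos s) hρ
  simp only [mul_min_div_eq_min (hβpos s _)]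
  exact sum_mul_sub_weighted_mean_eq_zero hnormaliser.ne' (hBell s)

/-- The value function of the `ρ̄`-truncated policy has zero V-trace Bellman error,
hence is a fixed point of the V-trace operator. -/
theorem vtrace_fixed_point (M : FinMDP S A) (π β : S → A → ℝ)
    (hπ : IsPolicy π) (hβ : IsPolicy β) (hβpos : ∀ s a, 0 < β s a)
    (ρbar : ℝ) (hρ : 0 < ρbar) (Vρ : S → ℝ)
    (hBell : ∀ s, Vρ s = ∑ a,
        (min (ρbar * β s a) (π s a) / ∑ b, min (ρbar * β s b) (π s b)) *
          (M.r s a + M.γ * ∑ s', M.P s a s' * Vρ s')) :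
    ∀ s, ∑ a, β s a * min ρbar (π s a / β s a) *
        (M.r s a + M.γ * (∑ s', M.P s a s' * Vρ s') - Vρ s) = 0 :=
  vtrace_fixed_point_general M π β hπ hβpos ρbar hρ Vρ hBell
end
end

section
/- In the V-trace contraction proof, the coefficients α_t = ρ_{t−1} − c_{t−1} ρ_t have nonnegative expectation: E_{τ∼β}[ρ_{t−1} − c_{t−1} ρ_t] ≥ E_{τ∼β}[c_{t−1}(1 − ρ_t)] ≥ 0, given ρ̄ ≥ c̄, c_i = min(c̄, π(a_i|s_i)/β(a_i|s_i)), ρ_t = min(ρ̄, π(a_t|s_t)/β(a_t|s_t)), and E_{β}[π(a_t|s_t)/β(a_t|s_t)] = 1, with the convention c_{−1} = ρ_{−1} = 1. -/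
open Finset

noncomputable section

variable {S A : Type*} [Fintype S] [Fintype A] [DecidableEq S]

/-- The V-trace coefficients `α_t = ρ_{t−1} − c_{t−1} ρ_t` have nonnegative
(conditional) expectation: `E[ρ_{t−1} − c_{t−1}ρ_t] ≥ E[c_{t−1}(1 − ρ_t)] ≥ 0`;
the first conjunct is the `t = 0` case using the convention `c₋₁ = ρ₋₁ = 1`. -/
theorem vtrace_coefficients_nonneg (M : FinMDP S A) (π β : S → A → ℝ)
    (hπ : IsPolicy π) (hβ : IsPolicy β) (hβpos : ∀ s a, 0 < β s a)
    (cbar ρbar : ℝ) (hc : 0 ≤ cbar) (hcρ : cbar ≤ ρbar) (s : S) :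
    1 - ∑ a, β s a * min ρbar (π s a / β s a) ≥ 0 ∧
    ∑ a, β s a * (min ρbar (π s a / β s a)
        - min cbar (π s a / β s a) *
            ∑ s', M.P s a s' * ∑ a', β s' a' * min ρbar (π s' a' / β s' a'))
      ≥ ∑ a, β s a * (min cbar (π s a / β s a) *
          (1 - ∑ s', M.P s a s' * ∑ a', β s' a' * min ρbar (π s' a' / β s' a'))) ∧
    ∑ a, β s a * (min cbar (π s a / β s a) *
        (1 - ∑ s', M.P s a s' * ∑ a', β s' a' * min ρbar (π s' a' / β s' a'))) ≥ 0 := by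
  have key : ∀ s' : S, ∑ a, β s' a * min ρbar (π s' a / β s' a) ≤ 1 := by
    intro s'
    calc ∑ a, β s' a * min ρbar (π s' a / β s' a)
        ≤ ∑ a, β s' a * (π s' a / β s' a) := by
          apply Finset.sum_le_sum; intro a _
          exact mul_le_mul_of_nonneg_left (min_le_right _ _) (hβpos s' a).le
      _ = ∑ a, π s' a := by
          apply Finset.sum_congr rfl; intro a _
          rw [mul_div_cancel₀ _ (hβpos s' a).ne']
      _ = 1 := hπ.2 s'
  have hρnn : ∀ s' a, 0 ≤ min ρbar (π s' a / β s' a) := fun s' a =>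
    le_min (hc.trans hcρ) (div_nonneg (hπ.1 s' a) (hβpos s' a).le)
  have hcnn : ∀ s' a, 0 ≤ min cbar (π s' a / β s' a) := fun s' a =>
    le_min hc (div_nonneg (hπ.1 s' a) (hβpos s' a).le)
  have hPnn : ∀ a, 0 ≤ 1 - ∑ s', M.P s a s' * ∑ a', β s' a' * min ρbar (π s' a' / β s' a') := by
    intro a
    have : ∑ s', M.P s a s' * ∑ a', β s' a' * min ρbar (π s' a' / β s' a') ≤ 1 := by
      calc ∑ s', M.P s a s' * ∑ a', β s' a' * min ρbar (π s' a' / β s' a')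
          ≤ ∑ s', M.P s a s' * 1 := by
            apply Finset.sum_le_sum; intro s' _
            exact mul_le_mul_of_nonneg_left (key s') (M.P_nonneg s a s')
        _ = 1 := by simpa using M.P_sum s a
    linarith
  refine ⟨by linarith [key s], ?_, ?_⟩
  · have h : ∀ a ∈ Finset.univ, β s a * (min cbar (π s a / β s a) *
        (1 - ∑ s', M.P s a s' * ∑ a', β s' a' * min ρbar (π s' a' / β s' a')))
        ≤ β s a * (min ρbar (π s a / β s a)
        - min cbar (π s a / β s a) *
            ∑ s', M.P s a s' * ∑ a', β s' a' * min ρbar (π s' a' / β s' a')) := by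
      intro a _
      have hle : min cbar (π s a / β s a) ≤ min ρbar (π s a / β s a) :=
        min_le_min hcρ le_rfl
      have := (hβpos s a).le
      nlinarith
    exact Finset.sum_le_sum h
  · apply Finset.sum_nonneg; intro a _
    exact mul_nonneg (hβpos s a).le (mul_nonneg (hcnn s a) (hPnn a))
end
end
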